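/- Let X be an n×n positive semidefinite matrix, Y an n×n positive definite matrix with largest eigenvalue λ_max and smallest eigenvalue λ_min, and P Hermitian with 0 ≤ P ≤ I. Then |Tr(P [X, ln Y])| ≤ Tr(X) · ln(λ_max/λ_min). -/

import Mathlib

open Matrix Kronecker
open scoped ComplexOrder

/-- Operator norm of a complex matrix: the norm of the induced operator on Euclidean space. -/
noncomputable def opNorm {n : Type*} [Fintype n] [DecidableEq n]
    (A : Matrix n n ℂ) : ℝ :=
  ‖Matrix.toEuclideanCLM (𝕜 := ℂ) A‖

/-- Matrix logarithm of a Hermitian matrix, defined by functional calculus via the spectral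
decomposition (and as `0` on non-Hermitian matrices).  Since `Real.log 0 = 0`, on a positive
semidefinite matrix this is the logarithm on the support. -/
noncomputable def mlog {n : Type*} [Fintype n] [DecidableEq n]
    (A : Matrix n n ℂ) : Matrix n n ℂ :=
  if hA : A.IsHermitian then
    (hA.eigenvectorUnitary : Matrix n n ℂ) *
      Matrix.diagonal (fun i => (Real.log (hA.eigenvalues i) : ℂ)) *
      (star (hA.eigenvectorUnitary : Matrix n n ℂ))
  else 0

/-- The Lindblad generator `𝓛(ρ) = -i[H,ρ] + Σ_α (L_α ρ L_α† - ½ L_α† L_α ρ - ½ ρ L_α† L_α)`. -/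
noncomputable def lindblad {n : Type*} [Fintype n] {ι : Type*} [Fintype ι]
    (H : Matrix n n ℂ) (L : ι → Matrix n n ℂ) (ρ : Matrix n n ℂ) : Matrix n n ℂ :=
  -(Complex.I) • (H * ρ - ρ * H) +
    ∑ α, (L α * ρ * (L α)ᴴ - (2:ℂ)⁻¹ • ((L α)ᴴ * (L α) * ρ) - (2:ℂ)⁻¹ • (ρ * (L α)ᴴ * (L α)))

/-- Partial trace over the second tensor factor. -/
noncomputable def ptraceR {m p : Type*} [Fintype p]
    (ρ : Matrix (m × p) (m × p) ℂ) : Matrix m m ℂ :=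
  Matrix.of fun i j => ∑ b, ρ (i, b) (j, b)

/-- Partial trace over the first tensor factor. -/
noncomputable def ptraceL {m p : Type*} [Fintype m]
    (ρ : Matrix (m × p) (m × p) ℂ) : Matrix p p ℂ :=
  Matrix.of fun i j => ∑ a, ρ (a, i) (a, j)

/-- A density matrix: positive semidefinite with trace one. -/
noncomputable def IsDensityMatrix {n : Type*} [Fintype n] (ρ : Matrix n n ℂ) : Prop :=
  ρ.PosSemidef ∧ ρ.trace = 1

/-- Von Neumann entropy `S(ρ) = -Tr(ρ ln ρ) = -Σ_i λ_i ln λ_i` (with `0 ln 0 = 0`). -/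
noncomputable def vNEntropy {n : Type*} [Fintype n] [DecidableEq n]
    (ρ : Matrix n n ℂ) : ℝ :=
  if h : ρ.IsHermitian then -∑ i, (h.eigenvalues i) * Real.log (h.eigenvalues i) else 0

section Helpers

open scoped Matrix.Norms.L2Operator ComplexInnerProductSpace

variable {n : Type*} [Fintype n] [DecidableEq n]


lemma abs_trace_mul_le' (A X : Matrix n n ℂ)
    (hX : X.PosSemidef) : ‖(A * X).trace‖ ≤ ‖A‖ * X.trace.re := by
  obtain ⟨B, rfl⟩ := (by open scoped MatrixOrder in obtain ⟨B, hB⟩ := CStarAlgebra.nonneg_iff_eq_star_mul_self.mp hX.nonneg; exact ⟨B, hB⟩ : ∃ B : Matrix n n ℂ, X = Bᴴ * B)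
  set f := Matrix.toEuclideanCLM (𝕜 := ℂ) A with hf
  set w : n → EuclideanSpace ℂ n := fun i => (WithLp.equiv 2 _).symm (star (B i)) with hw
  have hentry : ∀ i, (B * A * Bᴴ) i i = ⟪w i, f (w i)⟫ := by
    intro i
    rw [hw, hf]
    simp only [WithLp.equiv_symm_apply, toEuclideanCLM_toLp, EuclideanSpace.inner_toLp_toLp,
      Matrix.toLin'_apply, star_star, Matrix.mul_apply, Matrix.conjTranspose_apply,
      Matrix.mulVec, dotProduct, Pi.star_apply]
    simp only [Finset.sum_mul, Finset.mul_sum]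
    rw [Finset.sum_comm]
    apply Finset.sum_congr rfl; intro j _
    apply Finset.sum_congr rfl; intro k _
    ring
  have hnorm : ∀ i, (‖w i‖ : ℝ)^2 = ((B * Bᴴ) i i).re := by
    intro i
    have : (⟪w i, w i⟫ : ℂ) = (B * Bᴴ) i i := by
      rw [hw]
      simp only [WithLp.equiv_symm_apply, EuclideanSpace.inner_toLp_toLp, star_star, Matrix.mul_apply,
        Matrix.conjTranspose_apply, dotProduct, Pi.star_apply, mul_comm]
    have h2 : (⟪w i, w i⟫ : ℂ) = ((‖w i‖ : ℝ)^2 : ℝ) := by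
      exact_mod_cast inner_self_eq_norm_sq_to_K (𝕜 := ℂ) (w i)
    rw [← this, h2, Complex.ofReal_re]
  have htr : (A * (Bᴴ * B)).trace = ∑ i, ⟪w i, f (w i)⟫ := by
    rw [← Matrix.mul_assoc, Matrix.trace_mul_cycle]
    exact Finset.sum_congr rfl fun i _ => hentry i
  have htr2 : (Bᴴ * B).trace.re = ∑ i, (‖w i‖:ℝ)^2 := by
    rw [Matrix.trace_mul_comm, Matrix.trace, Complex.re_sum]
    exact Finset.sum_congr rfl fun i _ => (hnorm i).symm
  rw [htr, htr2]
  calc ‖∑ i, ⟪w i, f (w i)⟫‖ ≤ ∑ i, ‖⟪w i, f (w i)⟫‖ :=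
        norm_sum_le _ _
    _ ≤ ∑ i, ‖A‖ * ‖w i‖^2 := by
        refine Finset.sum_le_sum fun i _ => ?_
        have h1 : ‖(⟪w i, f (w i)⟫ : ℂ)‖ ≤ ‖w i‖ * ‖f (w i)‖ := norm_inner_le_norm _ _
        have h2 : ‖f (w i)‖ ≤ ‖f‖ * ‖w i‖ := f.le_opNorm _
        have h3 : ‖f‖ = ‖A‖ := (Matrix.cstar_norm_def A).symm
        nlinarith [norm_nonneg (w i), norm_nonneg (f (w i))]
    _ = ‖A‖ * ∑ i, (‖w i‖:ℝ)^2 := by rw [Finset.mul_sum]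


lemma norm_le_of_mulVec (C : Matrix n n ℂ) (r : ℝ) (hr : 0 ≤ r)
    (h : ∀ x : EuclideanSpace ℂ n, ‖toEuclideanCLM (𝕜 := ℂ) C x‖ ≤ r * ‖x‖) : ‖C‖ ≤ r := by
  rw [Matrix.cstar_norm_def]
  exact ContinuousLinearMap.opNorm_le_bound _ hr h

lemma norm_one_le' : ‖(1 : Matrix n n ℂ)‖ ≤ 1 := by
  rw [Matrix.cstar_norm_def, _root_.map_one]
  exact ContinuousLinearMap.norm_id_le

lemma norm_unitary_le (U : Matrix n n ℂ) (hU : U ∈ Matrix.unitaryGroup n ℂ) : ‖U‖ ≤ 1 := by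
  have h1 : ‖star U * U‖ = ‖U‖ * ‖U‖ := CStarRing.norm_star_mul_self
  have h2 : star U * U = 1 := (Matrix.mem_unitaryGroup_iff'.mp hU)
  nlinarith [norm_nonneg U, norm_one_le' (n := n), h2 ▸ h1]

lemma norm_diagonal_le (d : n → ℂ) (r : ℝ) (hr : 0 ≤ r) (h : ∀ i, ‖d i‖ ≤ r) :
    ‖Matrix.diagonal d‖ ≤ r := by
  refine norm_le_of_mulVec _ r hr fun x => ?_
  have hx : toEuclideanCLM (𝕜 := ℂ) (Matrix.diagonal d) x
      = (WithLp.equiv 2 _).symm (Matrix.diagonal d *ᵥ (WithLp.equiv 2 _) x) := by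
    conv_lhs => rw [← Equiv.symm_apply_apply (WithLp.equiv 2 (n → ℂ)) x]
    rfl
  rw [hx, EuclideanSpace.norm_eq]
  have hxn : r * ‖x‖ = Real.sqrt ((r*‖x‖)^2) := (Real.sqrt_sq (by positivity)).symm
  rw [hxn]
  apply Real.sqrt_le_sqrt
  have hxe : ‖x‖^2 = ∑ i, ‖x i‖^2 := by
    rw [EuclideanSpace.norm_eq, Real.sq_sqrt (by positivity)]
  calc ∑ i, ‖(WithLp.equiv 2 _).symm (Matrix.diagonal d *ᵥ (WithLp.equiv 2 _) x) i‖^2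
      = ∑ i, ‖d i * x i‖^2 := by
        apply Finset.sum_congr rfl; intro i _
        congr 1
        simp [Matrix.mulVec_diagonal]
    _ ≤ ∑ i, r^2 * ‖x i‖^2 := by
        refine Finset.sum_le_sum fun i _ => ?_
        rw [norm_mul, mul_pow]
        exact mul_le_mul_of_nonneg_right (pow_le_pow_left₀ (norm_nonneg _) (h i) 2) (sq_nonneg _)
    _ = (r * ‖x‖)^2 := by rw [← Finset.mul_sum, ← hxe]; ring

lemma norm_sq_eq_dot (a : n → ℂ) :
    ‖(WithLp.equiv 2 (n → ℂ)).symm a‖^2 = (dotProduct (star a) a).re := by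
  have h := inner_self_eq_norm_sq_to_K (𝕜 := ℂ) ((WithLp.equiv 2 (n → ℂ)).symm a)
  rw [WithLp.equiv_symm_apply, EuclideanSpace.inner_toLp_toLp, dotProduct_comm] at h
  rw [WithLp.equiv_symm_apply, h]
  norm_cast

lemma norm_P_le_one (P : Matrix n n ℂ) (hP0 : P.PosSemidef)
    (hP1 : ((1 : Matrix n n ℂ) - P).PosSemidef) : ‖P‖ ≤ 1 := by
  obtain ⟨C, hC⟩ := (by open scoped MatrixOrder in obtain ⟨C, hC⟩ := CStarAlgebra.nonneg_iff_eq_star_mul_self.mp hP0.nonneg; exact ⟨C, hC⟩ : ∃ C : Matrix n n ℂ, P = Cᴴ * C)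
  have hCnorm : ‖C‖ ≤ 1 := by
    refine norm_le_of_mulVec C 1 zero_le_one fun x => ?_
    set x' : n → ℂ := (WithLp.equiv 2 (n → ℂ)) x with hx'
    have hfx : toEuclideanCLM (𝕜 := ℂ) C x = (WithLp.equiv 2 (n → ℂ)).symm (C *ᵥ x') := by
      conv_lhs => rw [← Equiv.symm_apply_apply (WithLp.equiv 2 (n → ℂ)) x]
      rfl
    have hxx : x = (WithLp.equiv 2 (n → ℂ)).symm x' := (Equiv.symm_apply_apply _ x).symm
    have h1 : ‖toEuclideanCLM (𝕜 := ℂ) C x‖^2 = (dotProduct (star x') ((Cᴴ * C) *ᵥ x')).re := by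
      rw [hfx, norm_sq_eq_dot, Matrix.star_mulVec, ← dotProduct_mulVec,
        Matrix.mulVec_mulVec]
    have h2 : ‖x‖^2 = (dotProduct (star x') x').re := by
      rw [hxx, norm_sq_eq_dot]
    have h3 := hP1.dotProduct_mulVec_nonneg x'
    rw [Matrix.sub_mulVec, Matrix.one_mulVec, dotProduct_sub] at h3
    have h4 : 0 ≤ (dotProduct (star x') x' - dotProduct (star x') (P *ᵥ x')).re :=
      (Complex.le_def.mp h3).1
    rw [Complex.sub_re] at h4
    have h5 : ‖toEuclideanCLM (𝕜 := ℂ) C x‖^2 ≤ ‖x‖^2 := by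
      rw [h1, h2, ← hC]; linarith
    have := norm_nonneg (toEuclideanCLM (𝕜 := ℂ) C x)
    nlinarith [norm_nonneg x]
  have : ‖P‖ = ‖C‖ * ‖C‖ := by rw [hC, Matrix.l2_opNorm_conjTranspose_mul_self]
  nlinarith [norm_nonneg C]


end Helpers

open scoped Matrix.Norms.L2Operator ComplexInnerProductSpace

/-- If `0 ≤ X`, `Y` is positive definite with largest eigenvalue `λ_max` and smallest
eigenvalue `λ_min`, and `0 ≤ P ≤ I`, then `|Tr(P [X, ln Y])| ≤ Tr(X) · ln(λ_max/λ_min)`. -/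
theorem abs_trace_commutator_log_le {n : ℕ} (X Y P : Matrix (Fin n) (Fin n) ℂ)
    (hX : X.PosSemidef) (hY : Y.PosDef)
    (hP : P.IsHermitian) (hP0 : P.PosSemidef) (hP1 : ((1 : Matrix (Fin n) (Fin n) ℂ) - P).PosSemidef) :
    ‖(P * (X * mlog Y - mlog Y * X)).trace‖ ≤
      X.trace.re *
        Real.log ((⨆ i, hY.isHermitian.eigenvalues i) / (⨅ i, hY.isHermitian.eigenvalues i)) := by
  classical
  rcases Nat.eq_zero_or_pos n with hn | hn
  · subst hn
    simp [Matrix.trace]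
  haveI : Nonempty (Fin n) := Fin.pos_iff_nonempty.mp hn
  set lam : Fin n → ℝ := hY.isHermitian.eigenvalues with hlam
  set a : ℝ := ⨅ i, lam i with hadef
  set b : ℝ := ⨆ i, lam i with hbdef
  have hpos : ∀ i, 0 < lam i := fun i => hY.eigenvalues_pos i
  have hle : ∀ i, a ≤ lam i := fun i => ciInf_le (Set.finite_range lam).bddBelow i
  have hge : ∀ i, lam i ≤ b := fun i => le_ciSup (Set.finite_range lam).bddAbove i
  have ha : 0 < a := by
    obtain ⟨i, hi⟩ := exists_eq_ciInf_of_finite (f := lam)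
    rw [hadef, ← hi]; exact hpos i
  have hb : 0 < b := lt_of_lt_of_le ha ((hle (Classical.arbitrary _)).trans (hge _))
  set c : ℝ := (Real.log b + Real.log a) / 2 with hcdef
  set r : ℝ := (Real.log b - Real.log a) / 2 with hrdef
  have hlogle : ∀ i, |Real.log (lam i) - c| ≤ r := by
    intro i
    rw [abs_le]
    constructor
    · have := Real.log_le_log ha (hle i)
      rw [hrdef, hcdef]; linarith
    · have := Real.log_le_log (hpos i) (hge i)
      rw [hrdef, hcdef]; linarith
  have hr : 0 ≤ r := le_trans (abs_nonneg _) (hlogle (Classical.arbitrary _))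
  have hlogdiv : Real.log (b / a) = 2 * r := by
    rw [Real.log_div (ne_of_gt hb) (ne_of_gt ha), hrdef]; ring
  -- trace nonneg
  have htrre : 0 ≤ X.trace.re := by
    rw [Matrix.trace, Complex.re_sum]
    refine Finset.sum_nonneg fun i _ => ?_
    have h := hX.dotProduct_mulVec_nonneg (Pi.single i 1)
    have hxi : dotProduct (star (Pi.single i 1)) (X *ᵥ Pi.single i 1) = X i i := by
      simp [dotProduct, Matrix.mulVec, Pi.single_apply]
    rw [hxi] at h
    simpa using (Complex.le_def.mp h).1
  set U : Matrix (Fin n) (Fin n) ℂ := (hY.isHermitian.eigenvectorUnitary : Matrix (Fin n) (Fin n) ℂ) with hUdef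
  have hUmem : U ∈ Matrix.unitaryGroup (Fin n) ℂ := (hY.isHermitian.eigenvectorUnitary).2
  have hUU : U * star U = 1 := Matrix.mem_unitaryGroup_iff.mp hUmem
  have hmlog : mlog Y = U * Matrix.diagonal (fun i => (Real.log (lam i) : ℂ)) * star U := by
    rw [mlog, dif_pos hY.isHermitian]
  obtain ⟨T, hTdef⟩ : ∃ T : Matrix (Fin n) (Fin n) ℂ, T = mlog Y - (c : ℂ) • 1 := ⟨_, rfl⟩
  have hT : T = U * Matrix.diagonal (fun i => ((Real.log (lam i) - c : ℝ) : ℂ)) * star U := by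
    have h1 : (c : ℂ) • (1 : Matrix (Fin n) (Fin n) ℂ) = U * ((c : ℂ) • 1) * star U := by
      rw [Matrix.mul_smul, Matrix.smul_mul, Matrix.mul_one, hUU]
    rw [hTdef, hmlog, h1, ← Matrix.sub_mul, ← Matrix.mul_sub, Matrix.smul_one_eq_diagonal,
      Matrix.diagonal_sub]
    push_cast
    rfl
  have hU1 : ‖U‖ ≤ 1 := norm_unitary_le U hUmem
  have hU2 : ‖star U‖ ≤ 1 := by
    rw [Matrix.star_eq_conjTranspose, Matrix.l2_opNorm_conjTranspose]; exact hU1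
  have hDnorm : ‖Matrix.diagonal (fun i => ((Real.log (lam i) - c : ℝ) : ℂ))‖ ≤ r := by
    refine norm_diagonal_le _ r hr fun i => ?_
    rw [Complex.norm_real, Real.norm_eq_abs]
    exact hlogle i
  have hTnorm : ‖T‖ ≤ r := by
    rw [hT]
    calc ‖U * Matrix.diagonal (fun i => ((Real.log (lam i) - c : ℝ) : ℂ)) * star U‖
        ≤ ‖U * Matrix.diagonal (fun i => ((Real.log (lam i) - c : ℝ) : ℂ))‖ * ‖star U‖ :=
          Matrix.l2_opNorm_mul _ _
      _ ≤ (‖U‖ * ‖Matrix.diagonal (fun i => ((Real.log (lam i) - c : ℝ) : ℂ))‖) * ‖star U‖ := by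
          refine mul_le_mul_of_nonneg_right (Matrix.l2_opNorm_mul _ _) (norm_nonneg _)
      _ ≤ (1 * r) * 1 := by
          refine mul_le_mul (mul_le_mul hU1 hDnorm (norm_nonneg _) zero_le_one) hU2
            (norm_nonneg _) (by linarith)
      _ = r := by ring
  have hPnorm : ‖P‖ ≤ 1 := norm_P_le_one P hP0 hP1
  have hcomm : X * mlog Y - mlog Y * X = X * T - T * X := by
    rw [hTdef]
    simp only [Matrix.mul_sub, Matrix.sub_mul, Matrix.mul_smul, Matrix.smul_mul,
      Matrix.mul_one, Matrix.one_mul]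
    abel
  have hkey : (P * (X * T - T * X)).trace = ((T * P - P * T) * X).trace := by
    rw [Matrix.mul_sub, Matrix.sub_mul, Matrix.trace_sub, Matrix.trace_sub,
      ← Matrix.mul_assoc, ← Matrix.mul_assoc, Matrix.trace_mul_cycle P X T]
  have hTPnorm : ‖T * P - P * T‖ ≤ 2 * r := by
    calc ‖T * P - P * T‖ ≤ ‖T * P‖ + ‖P * T‖ := norm_sub_le _ _
      _ ≤ ‖T‖ * ‖P‖ + ‖P‖ * ‖T‖ := add_le_add (Matrix.l2_opNorm_mul _ _) (Matrix.l2_opNorm_mul _ _)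
      _ ≤ r * 1 + 1 * r := by
          refine add_le_add (mul_le_mul hTnorm hPnorm (norm_nonneg _) hr)
            (mul_le_mul hPnorm hTnorm (norm_nonneg _) zero_le_one)
      _ = 2 * r := by ring
  calc ‖(P * (X * mlog Y - mlog Y * X)).trace‖
      = ‖((T * P - P * T) * X).trace‖ := by rw [hcomm, hkey]
    _ ≤ ‖T * P - P * T‖ * X.trace.re := abs_trace_mul_le' _ _ hX
    _ ≤ (2 * r) * X.trace.re := mul_le_mul_of_nonneg_right hTPnorm htrre
    _ = X.trace.re * Real.log (b / a) := by rw [hlogdiv]; ring
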